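/- arXiv:1102.2828 — 2 statements merged into one kernel-verified Lean document; each statement's English description precedes it below -/
import Mathlib

section
/- Let D be a finite distributive lattice. The set Q of join-preserving maps f : D → D satisfying f(f(a)) = f(a) ≤ a for all a, ordered pointwise, is order-isomorphic to the powerset of J(D) ordered by inclusion, via f ↦ {p ∈ J(D) : f(p) = p} with inverse T ↦ f_T where f_T(a) = ⋁{p ∈ J(D) : p ∈ T, p ≤ a}. -/
/-!
A join-preserving kernel operator `f` on a finite distributive lattice is determined by its
join-irreducible fixed points: `f a` is the join of those lying below `a`. Indeed, a fixed point
`b` equals `f b = ⋁ f q` over a decomposition of `b` into join-irreducibles `q`, and each term with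
`f q ≠ q` is a fixed point strictly below `b`, to which well-founded induction applies. Conversely, since
join-irreducibles are join-prime, for any set `T` of join-irreducibles `a ↦ ⋁ {p ∈ T | p ≤ a}`
is such an operator, and its join-irreducible fixed points are exactly `T`.
-/

open Finset
open scoped Classical

abbrev JoinPrimes (D : Type*) [SemilatticeSup D] [OrderBot D] :=
  {p : D // p ≠ ⊥ ∧ ∀ b c : D, p ≤ b ⊔ c → p ≤ b ∨ p ≤ c}

namespace JoinPrimes

variable {D : Type*} [SemilatticeSup D] [OrderBot D]

theorem supPrime (p : JoinPrimes D) : SupPrime p.1 :=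
  ⟨fun h => p.2.1 h.eq_bot, fun _ _ h => p.2.2 _ _ h⟩

end JoinPrimes

section supBelow

variable {D : Type*} [SemilatticeSup D] [OrderBot D] [Fintype D]

noncomputable def supBelow (T : Set (JoinPrimes D)) (a : D) : D :=
  (univ.filter fun p : JoinPrimes D => p ∈ T ∧ p.1 ≤ a).sup Subtype.val

variable {T T' : Set (JoinPrimes D)} {a b : D}

theorem le_supBelow {p : JoinPrimes D} (hp : p ∈ T) (hpa : p.1 ≤ a) : p.1 ≤ supBelow T a :=
  le_sup (mem_filter.2 ⟨mem_univ _, hp, hpa⟩)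

theorem supBelow_le (h : ∀ p ∈ T, p.1 ≤ a → p.1 ≤ b) : supBelow T a ≤ b :=
  Finset.sup_le fun p hp => h p (mem_filter.1 hp).2.1 (mem_filter.1 hp).2.2

theorem isLUB_supBelow (T : Set (JoinPrimes D)) (a : D) :
    IsLUB {x : D | ∃ p, p ∈ T ∧ p.1 ≤ a ∧ x = p.1} (supBelow T a) :=
  ⟨by rintro _ ⟨p, hp, hpa, rfl⟩; exact le_supBelow hp hpa,
    fun _ hb => supBelow_le fun p hp hpa => hb ⟨p, hp, hpa, rfl⟩⟩

theorem supBelow_le_self (T : Set (JoinPrimes D)) (a : D) : supBelow T a ≤ a :=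
  supBelow_le fun _ _ h => h

theorem supBelow_mono (hT : T ⊆ T') (hab : a ≤ b) : supBelow T a ≤ supBelow T' b :=
  supBelow_le fun _ hp hpa => le_supBelow (hT hp) (hpa.trans hab)

theorem supBelow_bot (T : Set (JoinPrimes D)) : supBelow T ⊥ = ⊥ :=
  le_bot_iff.1 (supBelow_le_self T ⊥)

theorem supBelow_supBelow (T : Set (JoinPrimes D)) (a : D) :
    supBelow T (supBelow T a) = supBelow T a :=
  le_antisymm (supBelow_le_self T _)
    (supBelow_le fun _ hp hpa => le_supBelow hp (le_supBelow hp hpa))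

theorem supBelow_sup (T : Set (JoinPrimes D)) (a b : D) :
    supBelow T (a ⊔ b) = supBelow T a ⊔ supBelow T b := by
  refine le_antisymm (supBelow_le fun p hp hpab => ?_)
    (sup_le (supBelow_mono le_rfl le_sup_left) (supBelow_mono le_rfl le_sup_right))
  rcases p.2.2 a b hpab with hpa | hpb
  · exact le_sup_of_le_left (le_supBelow hp hpa)
  · exact le_sup_of_le_right (le_supBelow hp hpb)

theorem supBelow_eq_self_iff (T : Set (JoinPrimes D)) (p : JoinPrimes D) :
    supBelow T p.1 = p.1 ↔ p ∈ T := by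
  refine ⟨fun h => ?_, fun hp => le_antisymm (supBelow_le_self T _) (le_supBelow hp le_rfl)⟩
  obtain ⟨q, hq, hpq⟩ := p.supPrime.le_finset_sup.1 h.ge
  obtain ⟨-, hqT, hqp⟩ := mem_filter.1 hq
  rwa [← Subtype.ext (le_antisymm hqp hpq)]

end supBelow

section kernel

variable {D : Type*} [DistribLattice D] [OrderBot D] [Fintype D]

def fixedPrimes (f : D → D) : Set (JoinPrimes D) :=
  {p | f p.1 = p.1}

variable (f : SupBotHom D D) (hidem : ∀ a, f (f a) = f a) (hdefl : ∀ a, f a ≤ a)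
include hidem hdefl

theorem le_supBelow_fixedPrimes {b : D} (hb : f b = b) : b ≤ supBelow (fixedPrimes f) b := by
  induction b using WellFoundedLT.induction with
  | _ b ih =>
    obtain ⟨s, hs, hirred⟩ := exists_supIrred_decomposition b
    have hb_sup : b = s.sup f := by rw [← hb, ← hs, map_finset_sup, Function.comp_id]
    refine hb_sup.trans_le (Finset.sup_le fun q hq => ?_)
    have hqb : q ≤ b := hs ▸ le_sup (f := id) hq
    by_cases hfq : f q = q
    · have hq := supPrime_iff_supIrred.2 (hirred hq)
      rw [hfq]
      exact le_supBelow (p := ⟨q, hq.ne_bot, fun _ _ h => hq.2 h⟩) hfq hqb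
    · have hfqb : f q < b := ((hdefl q).lt_of_ne hfq).trans_le hqb
      exact (ih _ hfqb (hidem q)).trans (supBelow_mono le_rfl hfqb.le)

theorem supBelow_fixedPrimes (a : D) : supBelow (fixedPrimes f) a = f a :=
  le_antisymm
    (supBelow_le fun p hp hpa => (hp : f p.1 = p.1) ▸ OrderHomClass.mono f hpa)
    ((le_supBelow_fixedPrimes f hidem hdefl (hidem a)).trans (supBelow_mono le_rfl (hdefl a)))

end kernel

abbrev JoinKernels (D : Type*) [Lattice D] [OrderBot D] :=
  {f : D → D // (∀ a b, f (a ⊔ b) = f a ⊔ f b) ∧ f ⊥ = ⊥ ∧ (∀ a, f (f a) = f a) ∧ (∀ a, f a ≤ a)}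

namespace JoinKernels

variable {D : Type*} [DistribLattice D] [OrderBot D] [Fintype D]

theorem supBelow_fixedPrimes_eq (f : JoinKernels D) : supBelow (fixedPrimes f.1) = f.1 :=
  let ⟨f, hsup, hbot, hidem, hdefl⟩ := f
  funext (supBelow_fixedPrimes ⟨⟨f, hsup⟩, hbot⟩ hidem hdefl)

noncomputable def orderIsoSetJoinPrimes : JoinKernels D ≃o Set (JoinPrimes D) where
  toFun f := fixedPrimes f.1
  invFun T := ⟨supBelow T, supBelow_sup T, supBelow_bot T, supBelow_supBelow T,
    supBelow_le_self T⟩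
  left_inv f := Subtype.ext (supBelow_fixedPrimes_eq f)
  right_inv T := Set.ext (supBelow_eq_self_iff T)
  map_rel_iff' {f g} := by
    refine ⟨fun h a => ?_, fun h p hp => le_antisymm (g.2.2.2.2 _) (hp.symm.trans_le (h p.1))⟩
    rw [← supBelow_fixedPrimes_eq f, ← supBelow_fixedPrimes_eq g]
    exact supBelow_mono h le_rfl

end JoinKernels

theorem stmt_10 {D : Type*} [DistribLattice D] [BoundedOrder D] [Fintype D] :
    ∃ e : {f : D → D // (∀ a b, f (a ⊔ b) = f a ⊔ f b) ∧ f ⊥ = ⊥ ∧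
            (∀ a, f (f a) = f a) ∧ (∀ a, f a ≤ a)} ≃o
          Set {p : D // p ≠ ⊥ ∧ ∀ b c : D, p ≤ b ⊔ c → p ≤ b ∨ p ≤ c},
      (∀ f, e f = {p | f.1 p.1 = p.1}) ∧
      (∀ (T : Set {p : D // p ≠ ⊥ ∧ ∀ b c : D, p ≤ b ⊔ c → p ≤ b ∨ p ≤ c}) (a : D),
        IsLUB {x : D | ∃ p, p ∈ T ∧ p.1 ≤ a ∧ x = p.1} ((e.symm T).1 a)) := by
  exact ⟨JoinKernels.orderIsoSetJoinPrimes, fun _ => rfl, isLUB_supBelow⟩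
end

section
/- In a finite poset X, a nonempty subset S has a maximum element (is rooted) if and only if for all downward-closed subsets A, B of X, S ⊆ A ∪ B implies S ⊆ A or S ⊆ B, where A, B range over downsets of the form ↓a for elements a of the lattice of downsets; equivalently: S is rooted iff for all downsets A, B ⊆ X, S ⊆ A ∪ B implies S ⊆ A or S ⊆ B. -/
/-! A greatest element `p` of `S` puts `S` inside whichever of the two lower sets contains `p`.
Conversely, pick a maximal element `p` of the finite set `S` and cover `S` by the lower sets
`Iic p` and `lowerClosure (S \ Iic p)`. If `S` lay in the second one, so would `p`, i.e.
`p ≤ s` for some `s ∈ S` with `s ≰ p`, contradicting maximality; hence `S ⊆ Iic p`. -/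

open Set

section

variable {α : Type*} [Preorder α] {S A B : Set α}

lemma IsGreatest.subset_or_subset_of_subset_union {p : α} (hp : IsGreatest S p)
    (hA : IsLowerSet A) (hB : IsLowerSet B) (hS : S ⊆ A ∪ B) : S ⊆ A ∨ S ⊆ B :=
  (hS hp.1).imp (fun hpA _ hq => hA (hp.2 hq) hpA) (fun hpB _ hq => hB (hp.2 hq) hpB)

lemma Set.Finite.exists_isGreatest_of_subset_union (hfin : S.Finite) (hne : S.Nonempty)
    (h : ∀ A B : Set α, IsLowerSet A → IsLowerSet B → S ⊆ A ∪ B → S ⊆ A ∨ S ⊆ B) :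
    ∃ p, IsGreatest S p := by
  obtain ⟨p, hpS, hpmax⟩ := hfin.exists_maximal hne
  have hcover : S ⊆ Iic p ∪ lowerClosure (S \ Iic p) := fun s hs =>
    (em (s ≤ p)).imp id fun hsp => subset_lowerClosure ⟨hs, hsp⟩
  refine (h _ _ (isLowerSet_Iic p) (LowerSet.lower _) hcover).elim (fun hle => ⟨p, hpS, hle⟩) ?_
  intro hlow
  obtain ⟨s, ⟨hsS, hsp⟩, hps⟩ := mem_lowerClosure.1 (hlow hpS)
  exact absurd (hpmax hsS hps) hsp

end

theorem stmt_14 {X : Type*} [PartialOrder X] [Fintype X]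
    (S : Set X) (hS : S.Nonempty) :
    (∃ p ∈ S, ∀ q ∈ S, q ≤ p) ↔
      ∀ A B : Set X, IsLowerSet A → IsLowerSet B →
        S ⊆ A ∪ B → S ⊆ A ∨ S ⊆ B := by
  constructor
  · rintro ⟨p, hpS, hp⟩ A B hA hB
    exact IsGreatest.subset_or_subset_of_subset_union ⟨hpS, hp⟩ hA hB
  · intro h
    obtain ⟨p, hpS, hp⟩ := S.toFinite.exists_isGreatest_of_subset_union hS h
    exact ⟨p, hpS, hp⟩
end
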